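/- arXiv:math/0408343 — 2 statements merged into one kernel-verified Lean document; each statement's English description precedes it below -/
import Mathlib

section
/- Let Δ be a pure (r-1)-dimensional simplicial complex. Then for all 1 ≤ i ≤ r, the short simplicial h-vector satisfies h̃_{i-1}(Δ) = i·h_i(Δ) + (r-i+1)·h_{i-1}(Δ). -/
variable {α : Type*} [DecidableEq α]

/-- `K` is an (abstract) simplicial complex: it contains the empty face and is
closed under taking subsets. -/
def IsComplex (K : Finset (Finset α)) : Prop :=
  ∅ ∈ K ∧ ∀ F ∈ K, ∀ G ⊆ F, G ∈ K

/-- `K` is IsPure of dimension `r - 1`: every face is contained in a face of cardinality `r`. -/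
def IsPure (K : Finset (Finset α)) (r : ℕ) : Prop :=
  ∀ F ∈ K, ∃ B ∈ K, F ⊆ B ∧ B.card = r

/-- `fvec K j` is the number of faces of `K` of cardinality `j`. -/
def fvec (K : Finset (Finset α)) (j : ℕ) : ℕ := (K.filter (fun F => F.card = j)).card

/-- The `h`-vector of an `(r-1)`-dimensional complex:
`h_i = ∑_{j=0}^i (-1)^{i-j} C(r-j, r-i) f_j`. -/
def hvec (K : Finset (Finset α)) (r i : ℕ) : ℤ :=
  ∑ j ∈ Finset.range (i + 1), (-1 : ℤ) ^ (i - j) * ((r - j).choose (r - i) : ℤ) * (fvec K j : ℤ)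

/-- The vertex set of `K`. -/
def verts (K : Finset (Finset α)) : Finset α := K.sup id

/-- The link of a vertex `v` in `K`. -/
def lk (K : Finset (Finset α)) (v : α) : Finset (Finset α) :=
  (K.filter (fun F => v ∈ F)).image (fun F => F.erase v)

/-- The deletion `K - v` of a vertex: all faces of `K` avoiding `v`. -/
def delV (K : Finset (Finset α)) (v : α) : Finset (Finset α) := K.filter (fun F => v ∉ F)

/-- The deletion `K - A` of a set of vertices: all faces of `K` disjoint from `A`. -/
def delS (K : Finset (Finset α)) (A : Finset α) : Finset (Finset α) :=
  K.filter (fun F => Disjoint F A)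


lemma lk_fvec (K : Finset (Finset α)) (v : α) (j : ℕ) :
    fvec (lk K v) j = (K.filter (fun F => v ∈ F ∧ F.card = j + 1)).card := by
  unfold fvec lk
  rw [eq_comm]
  refine Finset.card_bij' (fun F _ => F.erase v) (fun G _ => insert v G) ?_ ?_ ?_ ?_
  · intro F hF
    simp only [Finset.mem_filter] at hF ⊢
    constructor
    · exact Finset.mem_image.2 ⟨F, Finset.mem_filter.2 ⟨hF.1, hF.2.1⟩, rfl⟩
    · rw [Finset.card_erase_of_mem hF.2.1, hF.2.2]; rfl
  · intro G hG
    simp only [Finset.mem_filter, Finset.mem_image] at hG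
    obtain ⟨⟨F, ⟨hFK, hvF⟩, rfl⟩, hcard⟩ := hG
    show insert v (F.erase v) ∈ _
    rw [Finset.insert_erase hvF]
    refine Finset.mem_filter.2 ⟨hFK, hvF, ?_⟩
    have := Finset.card_erase_of_mem hvF
    have := Finset.card_pos.2 ⟨v, hvF⟩
    omega
  · intro F hF
    simp only [Finset.mem_filter] at hF
    exact Finset.insert_erase hF.2.1
  · intro G hG
    simp only [Finset.mem_filter, Finset.mem_image] at hG
    obtain ⟨⟨F, hF, rfl⟩, _⟩ := hG
    exact Finset.erase_insert (Finset.notMem_erase v F)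

lemma sum_lk_fvec (K : Finset (Finset α)) (j : ℕ) :
    ∑ v ∈ verts K, fvec (lk K v) j = (j + 1) * fvec K (j + 1) := by
  have hsub : ∀ F ∈ K, F ⊆ verts K := fun F hF => Finset.le_sup (f := id) hF
  calc ∑ v ∈ verts K, fvec (lk K v) j
      = ∑ v ∈ verts K, ∑ F ∈ K, if v ∈ F ∧ F.card = j + 1 then 1 else 0 := by
        refine Finset.sum_congr rfl fun v _ => ?_
        rw [lk_fvec, Finset.card_filter]
    _ = ∑ F ∈ K, ∑ v ∈ verts K, if v ∈ F ∧ F.card = j + 1 then 1 else 0 :=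
        Finset.sum_comm
    _ = ∑ F ∈ K, if F.card = j + 1 then F.card else 0 := by
        refine Finset.sum_congr rfl fun F hF => ?_
        by_cases hc : F.card = j + 1
        · rw [if_pos hc]
          simp only [hc, and_true]
          rw [← Finset.card_filter, Finset.filter_mem_eq_inter,
            Finset.inter_eq_right.2 (hsub F hF)]
          exact hc
        · rw [if_neg hc]
          simp only [hc, and_false, if_false, Finset.sum_const_zero]
    _ = ∑ F ∈ K.filter (fun F => F.card = j + 1), F.card := (Finset.sum_filter _ _).symm
    _ = (j + 1) * fvec K (j + 1) := by
        rw [Finset.sum_congr rfl (fun F hF => (Finset.mem_filter.1 hF).2),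
          Finset.sum_const, fvec, smul_eq_mul, mul_comm]

/-- for a pure `(r-1)`-dimensional complex `K` and `1 ≤ i ≤ r`,
`h̃_{i-1}(K) = i·h_i(K) + (r-i+1)·h_{i-1}(K)`. -/
theorem stmt5 (K : Finset (Finset α)) (r : ℕ) (hK : IsComplex K) (hp : IsPure K r) :
    ∀ i, 1 ≤ i → i ≤ r →
      ∑ v ∈ verts K, hvec (lk K v) (r - 1) (i - 1) =
        (i : ℤ) * hvec K r i + ((r : ℤ) - i + 1) * hvec K r (i - 1) := by
  intro i hi1 hir
  have hi' : i - 1 + 1 = i := by omega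
  -- LHS computation
  have hL : ∑ v ∈ verts K, hvec (lk K v) (r - 1) (i - 1)
      = ∑ j ∈ Finset.range (i + 1),
          (-1 : ℤ) ^ (i - j) * (j : ℤ) * ((r - j).choose (r - i) : ℤ) * (fvec K j : ℤ) := by
    unfold hvec
    rw [Finset.sum_comm, hi', Finset.sum_range_succ']
    simp only [Nat.cast_zero, mul_zero, zero_mul, add_zero]
    refine Finset.sum_congr rfl fun j hj => ?_
    have e1 : i - (j + 1) = i - 1 - j := by omega
    have e2 : r - (j + 1) = r - 1 - j := by omega
    have e3 : r - 1 - (i - 1) = r - i := by omega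
    rw [← Finset.mul_sum]
    have hcast : ∑ v ∈ verts K, (fvec (lk K v) j : ℤ) = ((j : ℤ) + 1) * (fvec K (j + 1) : ℤ) := by
      rw [← Nat.cast_sum, sum_lk_fvec]
      push_cast
      ring
    rw [hcast, e1, e2, e3]
    push_cast
    ring
  rw [hL]
  -- RHS computation
  unfold hvec
  rw [hi']
  have hext : ∑ j ∈ Finset.range i,
        (-1 : ℤ) ^ (i - 1 - j) * ((r - j).choose (r - (i - 1)) : ℤ) * (fvec K j : ℤ)
      = ∑ j ∈ Finset.range (i + 1),
        (-1 : ℤ) ^ (i - 1 - j) * ((r - j).choose (r - (i - 1)) : ℤ) * (fvec K j : ℤ) := by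
    rw [Finset.sum_range_succ]
    have h0 : (r - i).choose (r - (i - 1)) = 0 := by
      apply Nat.choose_eq_zero_of_lt
      omega
    simp [h0]
  rw [hext, Finset.mul_sum, Finset.mul_sum, ← Finset.sum_add_distrib]
  refine Finset.sum_congr rfl fun j hj => ?_
  rw [Finset.mem_range] at hj
  have hji : j ≤ i := by omega
  rcases eq_or_lt_of_le hji with rfl | hlt
  · have h0 : (r - j).choose (r - (j - 1)) = 0 := by
      apply Nat.choose_eq_zero_of_lt
      omega
    simp [h0, Nat.sub_self]
  · have hk : i - j = (i - 1 - j) + 1 := by omega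
    have hrr : r - (i - 1) = (r - i) + 1 := by omega
    have hc := Nat.choose_succ_right_eq (r - j) (r - i)
    have hsub : r - j - (r - i) = i - j := by omega
    rw [hsub] at hc
    rw [hrr, hk, pow_succ]
    have hcz : ((r - j).choose (r - i) : ℤ) * ((i : ℤ) - j)
        = ((r - j).choose (r - i + 1) : ℤ) * ((r : ℤ) - i + 1) := by
      have h1 : ((i - j : ℕ) : ℤ) = (i : ℤ) - j := by omega
      have h2 : ((r - i + 1 : ℕ) : ℤ) = (r : ℤ) - i + 1 := by omega
      rw [← h1, ← h2, ← Nat.cast_mul, ← Nat.cast_mul, hc]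
    linear_combination ((-1 : ℤ) ^ (i - 1 - j) * (fvec K j : ℤ)) * hcz
end

section
/- Let M be a rank r matroid without coloops on n elements. Then (r-i+1)·h_{i-1}(M) ≤ (n-i)·h_i(M) for all 1 ≤ i ≤ r, where h_i(M) is the h-vector of the independence complex of M. -/
open Polynomial

variable {α : Type*}

/-- The rank of a set `A` in a matroid `M`: the largest cardinality of an independent
subset of `A`. -/
noncomputable def mr (M : Matroid α) (A : Set α) : ℕ :=
  sSup {n | ∃ I, M.Indep I ∧ I ⊆ A ∧ I.ncard = n}

/-- `mf M j` is the number of independent sets of `M` of cardinality `j`, i.e. the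
number of faces of cardinality `j` of the independence complex of `M`. -/
noncomputable def mf (M : Matroid α) (j : ℕ) : ℕ :=
  {I : Set α | M.Indep I ∧ I.ncard = j}.ncard

/-- The `h`-vector of the independence complex of a rank-`r` matroid `M`:
`h_i = ∑_{j=0}^i (-1)^{i-j} C(r-j, r-i) f_j`. -/
noncomputable def mh (M : Matroid α) (r i : ℕ) : ℤ :=
  ∑ j ∈ Finset.range (i + 1), (-1 : ℤ) ^ (i - j) * ((r - j).choose (r - i) : ℤ) * (mf M j : ℤ)

/-- Binomial coefficient `C(a,b)` for integers, with the convention that it is `0`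
whenever `b < 0` or `b > a`. -/
def ch (a b : ℤ) : ℤ := if 0 ≤ b ∧ b ≤ a then (a.toNat.choose b.toNat : ℤ) else 0

/-- `e` is a loop of `M`. -/
def mLoop (M : Matroid α) (e : α) : Prop := e ∈ M.closure ∅

/-- `e` is a coloop of `M`, i.e. a loop of the dual matroid. -/
def mColoop (M : Matroid α) (e : α) : Prop := e ∈ M✶.closure ∅

/-- `M` is connected: it is not the direct sum of two smaller matroids; equivalently,
`r(A) + r(E \ A) ≠ r(E)` for every proper nonempty subset `A` of the ground set. -/
def mConnected (M : Matroid α) : Prop :=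
  M.E.Nonempty ∧ ∀ A ⊆ M.E, A.Nonempty → (M.E \ A).Nonempty →
    mr M A + mr M (M.E \ A) ≠ mr M M.E

/-- The deletion `M - D`. -/
noncomputable def mdel (M : Matroid α) (D : Set α) : Matroid α := M.restrict (M.E \ D)

/-- The contraction `M / C`, defined as the dual of the deletion of `C` in the dual. -/
noncomputable def mcon (M : Matroid α) (C : Set α) : Matroid α := (mdel M✶ C)✶

/-- `P` is a parallel class of `M`: the set of all non-loop elements parallel to some
fixed non-loop element `e`. -/
def mParClass (M : Matroid α) (P : Set α) : Prop :=
  ∃ e ∈ M.E, ¬ mLoop M e ∧ P = {f | f ∈ M.E ∧ ¬ mLoop M f ∧ f ∈ M.closure {e}}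

/-- `S` is a series class of `M`: a parallel class of the dual matroid. -/
def mSerClass (M : Matroid α) (S : Set α) : Prop := mParClass M✶ S

/-- `T(M; x, 0)`: the Tutte polynomial of `M` (with ground set the whole fintype)
evaluated at `y = 0`, so that `T(M;x,0) = ∑_i b_i(M) x^i`. -/
noncomputable def bpoly [Fintype α] [DecidableEq α] (M : Matroid α) : Polynomial ℤ :=
  ∑ A : Finset α,
    (X - 1) ^ (mr M Set.univ - mr M (A : Set α)) *
      C ((-1 : ℤ) ^ (A.card - mr M (A : Set α)))

/-- Two elements of the ground set lie in the same connected component iff no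
separator (a set `A` with `r(A) + r(E \ A) = r(E)`) splits them. -/
def crel (M : Matroid α) (e f : α) : Prop :=
  e ∈ M.E ∧ f ∈ M.E ∧
    ∀ A ⊆ M.E, mr M A + mr M (M.E \ A) = mr M M.E → (e ∈ A ↔ f ∈ A)

/-- The number of connected components of `M`. -/
noncomputable def numComponents (M : Matroid α) : ℕ :=
  {S : Set α | ∃ e ∈ M.E, S = {f | crel M e f}}.ncard

/-!
Splitting the independent sets of `M` according to whether they contain an element `e` of a
basis gives `f_{j+1}(M) = f_{j+1}(M ＼ e) + f_j(M ／ e)`. On `h`-vectors this becomes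
`h_i(M) = h_i(M ＼ e) + h_{i-1}(M ／ e)` when `e` is not a coloop, while a coloop makes `M` a cone
over `M ＼ e = M ／ e`, and then `h_i(M) = h_i(M ＼ e)` for `i < r`. Induction on the ground set
shows that every matroid has a nonnegative `h`-vector.

Double counting the pairs `(e, I)` with `I` independent and `e ∉ I` gives
`∑_e h_i(M ＼ e) = (n - i) h_i(M) - (r - i + 1) h_{i-1}(M)`. Without coloops every `M ＼ e`
still has rank `r`, so every summand on the left is nonnegative.
-/

open Finset

section HTransform

def hTransform (r i : ℕ) (f : ℕ → ℤ) : ℤ :=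
  ∑ j ∈ range (i + 1), (-1 : ℤ) ^ (i - j) * ((r - j).choose (r - i) : ℤ) * f j

variable {r i : ℕ} {f g k : ℕ → ℤ}

@[simp] lemma hTransform_zero_right : hTransform r 0 f = f 0 := by
  simp [hTransform]

lemma hTransform_sum {ι : Type*} (s : Finset ι) (F : ι → ℕ → ℤ) :
    hTransform r i (fun j ↦ ∑ e ∈ s, F e j) = ∑ e ∈ s, hTransform r i (F e) := by
  simp only [hTransform, mul_sum]
  exact sum_comm

lemma hTransform_eq_add_of_succ (h0 : f 0 = g 0) (hs : ∀ j, f (j + 1) = g (j + 1) + k j) :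
    hTransform r i f = hTransform r i g + ∑ j ∈ range i,
      (-1 : ℤ) ^ (i - (j + 1)) * ((r - (j + 1)).choose (r - i) : ℤ) * k j := by
  simp only [hTransform, sum_range_succ' _ i, hs, h0, mul_add, sum_add_distrib]
  ring

lemma hTransform_of_succ (hi : 1 ≤ i) (h0 : f 0 = g 0) (hs : ∀ j, f (j + 1) = g (j + 1) + k j) :
    hTransform r i f = hTransform r i g + hTransform (r - 1) (i - 1) k := by
  rw [hTransform_eq_add_of_succ h0 hs]
  unfold hTransform
  rw [Nat.sub_add_cancel hi]
  congr 1
  refine sum_congr rfl fun j _ ↦ ?_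
  rw [show i - (j + 1) = i - 1 - j by omega, show r - (j + 1) = r - 1 - j by omega,
    show r - i = r - 1 - (i - 1) by omega]

lemma hTransform_cone (hir : i < r) (h0 : f 0 = g 0) (hs : ∀ j, f (j + 1) = g (j + 1) + g j) :
    hTransform r i f = hTransform (r - 1) i g := by
  rw [hTransform_eq_add_of_succ h0 hs, hTransform, hTransform, sum_range_succ, sum_range_succ,
    add_right_comm, ← sum_add_distrib]
  simp only [Nat.choose_self]
  congr 1
  refine sum_congr rfl fun j hj ↦ ?_
  have hj : j < i := mem_range.mp hj
  -- Pascal's rule for `C(r - j, r - i)`; the two terms carry opposite signs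
  obtain ⟨a, ha⟩ : ∃ a, r - j = a + 1 := ⟨r - 1 - j, by omega⟩
  obtain ⟨b, hb⟩ : ∃ b, r - i = b + 1 := ⟨r - 1 - i, by omega⟩
  rw [ha, hb, Nat.choose_succ_succ', show r - (j + 1) = a by omega, show r - 1 - j = a by omega,
    show r - 1 - i = b by omega, show i - j = i - (j + 1) + 1 by omega, pow_succ]
  push_cast
  ring

lemma hTransform_cone_top (h0 : f 0 = g 0) (hs : ∀ j, f (j + 1) = g (j + 1) + g j) :
    hTransform r r f = g r := by
  rw [hTransform_eq_add_of_succ h0 hs, hTransform, sum_range_succ, add_right_comm,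
    ← sum_add_distrib]
  have hcancel : ∀ j ∈ range r, (-1 : ℤ) ^ (r - j) * ((r - j).choose (r - r) : ℤ) * g j
      + (-1 : ℤ) ^ (r - (j + 1)) * ((r - (j + 1)).choose (r - r) : ℤ) * g j = 0 := by
    intro j hj
    rw [show r - j = r - (j + 1) + 1 by have := mem_range.mp hj; omega, pow_succ]
    simp
  rw [sum_eq_zero hcancel]
  simp

lemma hTransform_sub_mul (c : ℤ) (hi : 1 ≤ i) (hir : i ≤ r) :
    hTransform r i (fun j ↦ (c - j) * f j)
      = (c - i) * hTransform r i f - (r - i + 1) * hTransform r (i - 1) f := by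
  set d : ℤ := ∑ j ∈ range i,
    (-1 : ℤ) ^ (i - j) * ((r - j).choose (r - i) : ℤ) * ((i - j) * f j)
  have hsplit : hTransform r i (fun j ↦ (c - j) * f j) = (c - i) * hTransform r i f + d := by
    have hd : d = ∑ j ∈ range (i + 1),
        (-1 : ℤ) ^ (i - j) * ((r - j).choose (r - i) : ℤ) * ((i - j) * f j) := by
      simp [d, sum_range_succ]
    rw [hd, hTransform, hTransform, mul_sum, ← sum_add_distrib]
    exact sum_congr rfl fun j _ ↦ by ring
  rw [hsplit, sub_eq_add_neg _ ((r - i + 1 : ℤ) * _), add_right_inj]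
  unfold hTransform
  rw [Nat.sub_add_cancel hi, mul_sum, ← sum_neg_distrib]
  refine sum_congr rfl fun j hj ↦ ?_
  have hj : j < i := mem_range.mp hj
  have hchoose : ((r - j).choose (r - i) : ℤ) * (i - j)
      = ((r - j).choose (r - i + 1) : ℤ) * (r - i + 1) := by
    have hℕ := Nat.choose_succ_right_eq (r - j) (r - i)
    rw [show r - j - (r - i) = i - j by omega] at hℕ
    have hℤ := congrArg (Nat.cast : ℕ → ℤ) hℕ
    push_cast [Nat.cast_sub hj.le, Nat.cast_sub hir] at hℤ
    linarith
  rw [show r - (i - 1) = r - i + 1 by omega, show i - j = i - 1 - j + 1 by omega, pow_succ]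
  linear_combination (-(-1 : ℤ) ^ (i - 1 - j) * f j) * hchoose

end HTransform

lemma mColoop_iff_isColoop {M : Matroid α} {e : α} : mColoop M e ↔ M.IsColoop e := Iff.rfl

lemma mh_eq_hTransform (M : Matroid α) (r i : ℕ) :
    mh M r i = hTransform r i (fun j ↦ mf M j) := rfl

namespace Matroid

variable {M : Matroid α} {B : Set α} {e : α}

lemma IsBase.delete_singleton (hB : M.IsBase B) (heB : e ∉ B) : (M ＼ {e}).IsBase B :=
  delete_isBase_iff.mpr <|
    hB.isBasis_of_subset Set.sdiff_subset (Set.subset_sdiff_singleton hB.subset_ground heB)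

lemma IsBase.contract_singleton (hB : M.IsBase B) (heB : e ∈ B) :
    (M ／ {e}).IsBase (B \ {e}) := by
  rw [(hB.indep.subset (Set.singleton_subset_iff.mpr heB)).contract_isBase_iff,
    Set.sdiff_union_of_subset (Set.singleton_subset_iff.mpr heB)]
  exact ⟨hB, Set.disjoint_sdiff_left⟩

end Matroid

open Matroid

section Counting

variable [Finite α] {M : Matroid α} {B : Set α} {e : α}

lemma mr_ground_eq_ncard (hB : M.IsBase B) : mr M M.E = B.ncard := by
  refine IsGreatest.csSup_eq ⟨⟨B, hB.indep, hB.subset_ground, rfl⟩, ?_⟩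
  rintro _ ⟨I, hI, -, rfl⟩
  obtain ⟨B', hB', hIB'⟩ := hI.exists_isBase_superset
  exact (Set.ncard_le_ncard hIB').trans (hB'.ncard_eq_ncard_of_isBase hB).le

lemma mf_zero (M : Matroid α) : mf M 0 = 1 := by
  have h : {I : Set α | M.Indep I ∧ I.ncard = 0} = {∅} := by
    ext I
    simp only [Set.mem_ofPred, Set.mem_singleton_iff]
    constructor
    · rintro ⟨-, hI⟩
      exact (Set.ncard_eq_zero (s := I)).mp hI
    · rintro rfl
      exact ⟨M.empty_indep, Set.ncard_empty α⟩
  rw [mf, h, Set.ncard_singleton]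

lemma mf_succ_eq_mf_delete_add_mf_contract (he : M.IsNonloop e) (j : ℕ) :
    mf M (j + 1) = mf (M ＼ {e}) (j + 1) + mf (M ／ {e}) j := by
  have hdel : {I | (M ＼ {e}).Indep I ∧ I.ncard = j + 1}
      = {I | M.Indep I ∧ I.ncard = j + 1} \ {I | e ∈ I} := by
    ext I
    simp only [Set.mem_sdiff, Set.mem_ofPred, delete_indep_iff, Set.disjoint_singleton_right]
    tauto
  have hcon : insert e '' {I | (M ／ {e}).Indep I ∧ I.ncard = j}
      = {I | M.Indep I ∧ I.ncard = j + 1} ∩ {I | e ∈ I} := by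
    ext I
    simp only [Set.mem_image, Set.mem_inter_iff, Set.mem_ofPred, he.contractElem_indep_iff]
    constructor
    · rintro ⟨J, ⟨⟨heJ, hJ⟩, rfl⟩, rfl⟩
      exact ⟨⟨hJ, Set.ncard_insert_of_notMem heJ⟩, Set.mem_insert e J⟩
    · rintro ⟨⟨hI, hcard⟩, heI⟩
      refine ⟨I \ {e}, ⟨⟨fun h ↦ h.2 rfl, ?_⟩, ?_⟩, ?_⟩
      · rwa [Set.insert_sdiff_singleton, Set.insert_eq_of_mem heI]
      · rw [Set.ncard_sdiff_singleton_of_mem heI, hcard, Nat.add_sub_cancel]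
      · rw [Set.insert_sdiff_singleton, Set.insert_eq_of_mem heI]
  have hinj : Set.InjOn (insert e) {I | (M ／ {e}).Indep I ∧ I.ncard = j} := by
    intro I hI J hJ hIJ
    rw [← Set.insert_sdiff_self_of_notMem (he.contractElem_indep_iff.mp hI.1).1,
      ← Set.insert_sdiff_self_of_notMem (he.contractElem_indep_iff.mp hJ.1).1, hIJ]
  rw [mf, mf, mf, hdel, ← hinj.ncard_image, hcon, ← Set.ncard_inter_add_ncard_sdiff_eq_ncard
    {I | M.Indep I ∧ I.ncard = j + 1} {I | e ∈ I}, add_comm]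

theorem mh_nonneg (hB : M.IsBase B) {i : ℕ} (hi : i ≤ B.ncard) : 0 ≤ mh M B.ncard i := by
  induction hE : M.E.ncard using Nat.strong_induction_on generalizing M B i with
  | _ n ih =>
  obtain rfl | hi0 := i.eq_zero_or_pos
  · simp [mh_eq_hTransform]
  obtain ⟨e, heB⟩ : B.Nonempty := Set.nonempty_of_ncard_ne_zero (by omega)
  have he : M.IsNonloop e := hB.indep.isNonloop_of_mem heB
  have hsmaller : (M.E \ {e}).ncard < n :=
    hE ▸ Set.ncard_sdiff_singleton_lt_of_mem (hB.subset_ground heB)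
  have hcard : (B \ {e}).ncard = B.ncard - 1 := Set.ncard_sdiff_singleton_of_mem heB
  have hcon := hB.contract_singleton heB
  have h0 : (mf M 0 : ℤ) = mf (M ＼ {e}) 0 := by rw [mf_zero, mf_zero]
  have hs (j : ℕ) : (mf M (j + 1) : ℤ) = mf (M ＼ {e}) (j + 1) + mf (M ／ {e}) j := by
    exact_mod_cast mf_succ_eq_mf_delete_add_mf_contract he j
  rw [mh_eq_hTransform]
  by_cases hcol : M.IsColoop e
  · rw [contract_eq_delete_of_subset_coloops (Set.singleton_subset_iff.mpr hcol)] at hs hcon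
    rcases hi.lt_or_eq with hlt | rfl
    · rw [hTransform_cone (g := fun j ↦ mf (M ＼ {e}) j) hlt h0 hs, ← hcard]
      exact ih _ hsmaller hcon (by omega) rfl
    · rw [hTransform_cone_top (g := fun j ↦ mf (M ＼ {e}) j) h0 hs]
      positivity
  · obtain ⟨B', hB', heB'⟩ : ∃ B', M.IsBase B' ∧ e ∉ B' := by
      simpa [isColoop_iff_forall_mem_isBase] using hcol
    have hB'card := hB'.ncard_eq_ncard_of_isBase hB
    rw [hTransform_of_succ (g := fun j ↦ mf (M ＼ {e}) j) (k := fun j ↦ mf (M ／ {e}) j)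
      hi0 h0 hs, ← hcard, ← hB'card]
    exact add_nonneg (ih _ hsmaller (hB'.delete_singleton heB') (hB'card ▸ hi) rfl)
      (ih _ hsmaller hcon (by omega) rfl)

lemma sum_mf_delete (M : Matroid α) (j : ℕ) :
    ∑ e ∈ M.E.toFinite.toFinset, (mf (M ＼ {e}) j : ℤ)
      = ((M.E.ncard : ℤ) - j) * mf M j := by
  classical
  set E := M.E.toFinite.toFinset
  set S := {I : Set α | M.Indep I ∧ I.ncard = j}.toFinite.toFinset
  have hdel (e : α) : mf (M ＼ {e}) j = #{I ∈ S | e ∉ I} := by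
    rw [mf, Set.ncard_eq_toFinset_card _]
    congr 1
    ext I
    simp [S, delete_indep_iff]
    tauto
  have hcompl : ∀ I ∈ S, (#{e ∈ E | e ∉ I} : ℤ) = M.E.ncard - j := by
    intro I hIS
    obtain ⟨hI, rfl⟩ : M.Indep I ∧ I.ncard = j := by simpa [S] using hIS
    have hfilter : #{e ∈ E | e ∉ I} = (M.E \ I).ncard := by
      rw [Set.ncard_eq_toFinset_card _]
      congr 1
      ext e
      simp [E]
    rw [hfilter, Set.ncard_sdiff hI.subset_ground,
      Nat.cast_sub (Set.ncard_le_ncard hI.subset_ground)]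
  calc ∑ e ∈ E, (mf (M ＼ {e}) j : ℤ)
      = ∑ e ∈ E, (#{I ∈ S | e ∉ I} : ℤ) := by simp_rw [hdel]
    _ = ∑ I ∈ S, (#{e ∈ E | e ∉ I} : ℤ) := by
      exact_mod_cast sum_card_bipartiteAbove_eq_sum_card_bipartiteBelow (fun e I ↦ e ∉ I)
    _ = ((M.E.ncard : ℤ) - j) * mf M j := by
      rw [sum_congr rfl hcompl, sum_const, nsmul_eq_mul, mul_comm, mf,
        Set.ncard_eq_toFinset_card {I : Set α | M.Indep I ∧ I.ncard = j}]

lemma sum_mh_delete (M : Matroid α) {r i : ℕ} (hi : 1 ≤ i) (hir : i ≤ r) :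
    ∑ e ∈ M.E.toFinite.toFinset, mh (M ＼ {e}) r i
      = ((M.E.ncard : ℤ) - i) * mh M r i - (r - i + 1) * mh M r (i - 1) := by
  simp only [mh_eq_hTransform]
  rw [← hTransform_sum, ← hTransform_sub_mul _ hi hir]
  exact congrArg _ (funext (sum_mf_delete M))

end Counting

/-- if `M` is a rank-`r` matroid on `n` elements without coloops, then
`(r-i+1)·h_{i-1}(M) ≤ (n-i)·h_i(M)` for `1 ≤ i ≤ r`. -/
theorem stmt16 [Fintype α] (M : Matroid α) (r n : ℕ) (hr : mr M M.E = r)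
    (hn : M.E.ncard = n) (hcl : ∀ e, ¬ mColoop M e) :
    ∀ i, 1 ≤ i → i ≤ r →
      ((r : ℤ) - i + 1) * mh M r (i - 1) ≤ ((n : ℤ) - i) * mh M r i := by
  intro i hi hir
  obtain ⟨B, hB⟩ := M.exists_isBase
  obtain rfl : B.ncard = r := by rw [← hr, mr_ground_eq_ncard hB]
  have hdel : ∀ e ∈ M.E.toFinite.toFinset, 0 ≤ mh (M ＼ {e}) B.ncard i := by
    intro e _
    obtain ⟨B', hB', heB'⟩ : ∃ B', M.IsBase B' ∧ e ∉ B' := by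
      simpa [isColoop_iff_forall_mem_isBase] using mColoop_iff_isColoop.not.mp (hcl e)
    have hB'card := hB'.ncard_eq_ncard_of_isBase hB
    rw [← hB'card]
    exact mh_nonneg (hB'.delete_singleton heB') (hB'card ▸ hir)
  have hsum := sum_mh_delete M hi hir
  rw [hn] at hsum
  linarith [sum_nonneg hdel]
end
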